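/- Let q̃ : [0,∞) → ℝ be measurable with M := sup_{x≥0} ∫_x^{x+1} |q̃| < ∞. Define Q(ξ,η) = -(1/4)∫_ξ^η q̃(γ) dγ on {0 ≤ ξ ≤ η}. Then the Neumann series v = Σ_{n=0}^∞ (-1)^n K^n Q, where (Kv)(ξ,η) = (1/4)∫_0^ξ ∫_ξ^η q̃(η₁-ξ₁) v(ξ₁,η₁) dη₁ dξ₁, converges absolutely and uniformly on compact subsets of {0 ≤ ξ ≤ η}, and the limit v is continuous and satisfies the integral equation v = Q - Kv. -/

import Mathlib

open MeasureTheory intervalIntegral Filter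

/-- The Volterra-type integral operator from the Goursat problem. -/
noncomputable def Kop (q : ℝ → ℝ) (v : ℝ → ℝ → ℝ) : ℝ → ℝ → ℝ :=
  fun ξ η => (1 / 4) * ∫ ξ₁ in (0:ℝ)..ξ, ∫ η₁ in ξ..η, q (η₁ - ξ₁) * v ξ₁ η₁

/-- The inhomogeneity Q(ξ,η) = -(1/4)∫_ξ^η q̃(γ) dγ. -/
noncomputable def Qfun (q : ℝ → ℝ) : ℝ → ℝ → ℝ :=
  fun ξ η => -(1 / 4) * ∫ γ in ξ..η, q γ

/-!
The iterates `Kⁿ Q` are continuous on all of `ℝ²`: the inner integral of `K w` is a primitive in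
`η` that is locally bounded and measurable in `ξ₁`, so `K w` is a difference of two continuous
parametric primitives. On the triangle `0 ≤ ξ ≤ η ≤ R`, with `c = (1/4) ∫₀^R |q|`, the Volterra
structure of `K` gives `|Kⁿ Q (ξ, η)| ≤ c (c ξ)ⁿ / n!`. The exponential majorant yields absolute,
locally uniform convergence and continuity of the sum, and it dominates the exchange of `K` with
the sum, after which `v = Q - K v` is a shift of the index.
-/

open Set Topology Function
open scoped Interval Nat

section IntervalIntegrals

variable {f g : ℝ → ℝ} {a b c d s C : ℝ}

lemma abs_intervalIntegral_mul_le (hf : IntervalIntegrable f volume a b)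
    (hg : ∀ y ∈ Ι a b, |g y| ≤ C) :
    |∫ y in a..b, f y * g y| ≤ C * |(∫ y in a..b, |f y|)| := by
  rw [abs_integral_eq_abs_integral_uIoc, abs_integral_eq_abs_integral_uIoc,
    abs_of_nonneg (setIntegral_nonneg measurableSet_uIoc fun _ _ => abs_nonneg _),
    ← MeasureTheory.integral_const_mul, ← Real.norm_eq_abs]
  refine norm_integral_le_of_norm_le (hf.def'.abs.const_mul C) ?_
  filter_upwards [ae_restrict_mem measurableSet_uIoc] with y hy
  rw [Real.norm_eq_abs, abs_mul, mul_comm C]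
  exact mul_le_mul_of_nonneg_left (hg y hy) (abs_nonneg _)

lemma intervalIntegrable_comp_sub (hf : ∀ a b, IntervalIntegrable f volume a b) (s a b : ℝ) :
    IntervalIntegrable (fun y => f (y - s)) volume a b := by
  simpa using (hf (a - s) (b - s)).comp_sub_right s

lemma abs_intervalIntegral_comp_sub_mul_le (hf : ∀ a b, IntervalIntegrable f volume a b)
    (hC : 0 ≤ C) (hg : ∀ y ∈ Ι a b, |g y| ≤ C) (hsub : [[a - s, b - s]] ⊆ Icc c d) :
    |∫ y in a..b, f (y - s) * g y| ≤ C * ∫ y in c..d, |f y| := by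
  have hcd : c ≤ d := nonempty_Icc.1 ⟨_, hsub left_mem_uIcc⟩
  have hmono : |(∫ y in (a - s)..(b - s), |f y|)| ≤ |(∫ y in c..d, |f y|)| :=
    abs_integral_mono_interval
      (uIoc_subset_uIoc_of_uIcc_subset_uIcc (by rwa [uIcc_of_le hcd]))
      (Eventually.of_forall fun _ => abs_nonneg _) (hf c d).abs
  calc |∫ y in a..b, f (y - s) * g y|
      ≤ C * |(∫ y in a..b, |f (y - s)|)| :=
        abs_intervalIntegral_mul_le (intervalIntegrable_comp_sub hf s a b) hg
    _ = C * |(∫ y in (a - s)..(b - s), |f y|)| := by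
        rw [integral_comp_sub_right fun y => |f y|]
    _ ≤ C * ∫ y in c..d, |f y| := by
        rw [← abs_of_nonneg (integral_nonneg hcd fun _ _ => abs_nonneg _)]
        exact mul_le_mul_of_nonneg_left hmono hC

lemma intervalIntegral_tsum_of_abs_le_mul {F : ℕ → ℝ → ℝ} {B : ℕ → ℝ}
    (hF : ∀ n, IntervalIntegrable (F n) volume a b) (hg : IntervalIntegrable g volume a b)
    (hFB : ∀ n, ∀ x ∈ Ι a b, |F n x| ≤ B n * g x) (hB : Summable B) :
    ∫ x in a..b, ∑' n, F n x = ∑' n, ∫ x in a..b, F n x := by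
  refine (hasSum_integral_of_dominated_convergence (fun n x => B n * g x)
    (fun n => (hF n).def'.aestronglyMeasurable) (fun n => ae_of_all _ (hFB n))
    (ae_of_all _ fun x _ => hB.mul_right (g x)) ?_ (ae_of_all _ fun x hx => ?_)).tsum_eq.symm
  · simpa only [tsum_mul_right] using hg.const_mul (∑' n, B n)
  · exact (Summable.of_norm_bounded (hB.mul_right (g x)) fun n => hFB n x hx).hasSum

lemma continuous_parametric_primitive_of_locallyBounded {G : ℝ → ℝ → ℝ}
    (hmeas : ∀ t, AEStronglyMeasurable (G · t)) (hcont : ∀ s, Continuous (G s))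
    (hbdd : ∀ R, ∃ B, ∀ s t, |s| ≤ R → |t| ≤ R → |G s t| ≤ B) :
    Continuous fun p : ℝ × ℝ => ∫ s in (0:ℝ)..p.1, G s p.2 := by
  rw [continuous_iff_continuousAt]
  rintro ⟨x₀, t₀⟩
  set R := |x₀| + |t₀| + 1
  have hR : 0 < R := by positivity
  obtain ⟨B, hB⟩ := hbdd R
  have hdom : ∀ᶠ t in 𝓝 t₀, ∀ᵐ s ∂volume.restrict (Ι (-R) R), ‖G s t‖ ≤ B := by
    filter_upwards [Metric.ball_mem_nhds t₀ one_pos] with t ht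
    filter_upwards [ae_restrict_mem measurableSet_uIoc] with s hs
    rw [uIoc_of_le (by linarith : -R ≤ R)] at hs
    rw [Metric.mem_ball, Real.dist_eq] at ht
    have := abs_sub_abs_le_abs_sub t t₀
    exact hB s t (abs_le.2 ⟨hs.1.le, hs.2⟩) (by linarith [abs_nonneg x₀])
  have hx₀ : x₀ ∈ Ioo (-R) R := abs_lt.1 (by linarith [abs_nonneg t₀])
  have h0 : (0:ℝ) ∈ Ioo (-R) R := abs_lt.1 (by rwa [abs_zero])
  have h := continuousAt_parametric_primitive_of_dominated (F := fun t s => G s t) (fun _ => B)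
    (-R) R (fun t => (hmeas t).restrict) hdom intervalIntegrable_const
    (Eventually.of_forall fun s => (hcont s).continuousAt) h0 hx₀ (measure_singleton x₀)
  exact h.comp_of_eq continuous_swap.continuousAt rfl

end IntervalIntegrals

-- `Kop q w ξ η` is definitionally `1 / 4 * ∫ s in 0..ξ, kernelSlice q w s ξ η`.
noncomputable def kernelSlice (q : ℝ → ℝ) (w : ℝ → ℝ → ℝ) (s a b : ℝ) : ℝ :=
  ∫ y in a..b, q (y - s) * w s y

section KernelSlice

variable {q : ℝ → ℝ} {w : ℝ → ℝ → ℝ}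

lemma measurable_kernelSlice (hq : Measurable q) (hw : Measurable (uncurry w)) (a b : ℝ) :
    Measurable fun s => kernelSlice q w s a b := by
  have hF : StronglyMeasurable fun p : ℝ × ℝ => q (p.2 - p.1) * w p.1 p.2 :=
    ((hq.comp (measurable_snd.sub measurable_fst)).mul hw).stronglyMeasurable
  exact hF.integral_prod_right'.measurable.sub hF.integral_prod_right'.measurable

lemma intervalIntegrable_kernelSlice_integrand (hqi : ∀ a b, IntervalIntegrable q volume a b)
    (hw : Continuous (uncurry w)) (s a b : ℝ) :
    IntervalIntegrable (fun y => q (y - s) * w s y) volume a b :=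
  (intervalIntegrable_comp_sub hqi s a b).mul_continuousOn (hw.uncurry_left s).continuousOn

lemma continuous_kernelSlice (hqi : ∀ a b, IntervalIntegrable q volume a b)
    (hw : Continuous (uncurry w)) (s : ℝ) : Continuous (kernelSlice q w s 0) :=
  continuous_primitive (intervalIntegrable_kernelSlice_integrand hqi hw s) 0

lemma kernelSlice_eq_sub (hqi : ∀ a b, IntervalIntegrable q volume a b)
    (hw : Continuous (uncurry w)) (s a b : ℝ) :
    kernelSlice q w s a b = kernelSlice q w s 0 b - kernelSlice q w s 0 a :=
  (integral_interval_sub_left (intervalIntegrable_kernelSlice_integrand hqi hw s 0 b)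
    (intervalIntegrable_kernelSlice_integrand hqi hw s 0 a)).symm

lemma exists_abs_kernelSlice_le (hqi : ∀ a b, IntervalIntegrable q volume a b)
    (hw : Continuous (uncurry w)) (R : ℝ) :
    ∃ B, ∀ s a b, |s| ≤ R → |a| ≤ R → |b| ≤ R → |kernelSlice q w s a b| ≤ B := by
  obtain ⟨Bw, hBw⟩ := (isCompact_Icc.prod isCompact_Icc).exists_bound_of_continuousOn
    (s := Icc (-R) R ×ˢ Icc (-R) R) hw.continuousOn
  refine ⟨Bw * ∫ y in (-(2 * R))..(2 * R), |q y|, fun s a b hs ha hb => ?_⟩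
  have hwb : ∀ y ∈ [[a, b]], |w s y| ≤ Bw := fun y hy => by
    simpa using hBw (s, y) ⟨abs_le.1 hs, uIcc_subset_Icc (abs_le.1 ha) (abs_le.1 hb) hy⟩
  obtain ⟨hs₁, hs₂⟩ := abs_le.1 hs
  obtain ⟨ha₁, ha₂⟩ := abs_le.1 ha
  obtain ⟨hb₁, hb₂⟩ := abs_le.1 hb
  exact abs_intervalIntegral_comp_sub_mul_le hqi ((abs_nonneg _).trans (hwb a left_mem_uIcc))
    (fun y hy => hwb y (uIoc_subset_uIcc hy))
    (uIcc_subset_Icc ⟨by linarith, by linarith⟩ ⟨by linarith, by linarith⟩)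

lemma intervalIntegrable_kernelSlice (hq : Measurable q)
    (hqi : ∀ a b, IntervalIntegrable q volume a b) (hw : Continuous (uncurry w)) (a b x y : ℝ) :
    IntervalIntegrable (fun s => kernelSlice q w s a b) volume x y := by
  set R := max (max |a| |b|) (max |x| |y|)
  obtain ⟨B, hB⟩ := exists_abs_kernelSlice_le hqi hw R
  refine (intervalIntegrable_const (c := B)).mono_fun'
    (measurable_kernelSlice hq hw.measurable a b).aestronglyMeasurable ?_
  filter_upwards [ae_restrict_mem measurableSet_uIoc] with s hs
  have hxy : [[x, y]] ⊆ Icc (-R) R := uIcc_subset_Icc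
    (abs_le.1 (le_max_of_le_right (le_max_left _ _)))
    (abs_le.1 (le_max_of_le_right (le_max_right _ _)))
  exact hB s a b (abs_le.2 (hxy (uIoc_subset_uIcc hs))) (le_max_of_le_left (le_max_left _ _))
    (le_max_of_le_left (le_max_right _ _))

end KernelSlice

section Continuity

variable {q : ℝ → ℝ}

lemma continuous_Kop {w : ℝ → ℝ → ℝ} (hq : Measurable q)
    (hqi : ∀ a b, IntervalIntegrable q volume a b) (hw : Continuous (uncurry w)) :
    Continuous (uncurry (Kop q w)) := by
  have hΦ := continuous_parametric_primitive_of_locallyBounded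
    (G := fun s t => kernelSlice q w s 0 t)
    (fun t => (measurable_kernelSlice hq hw.measurable 0 t).aestronglyMeasurable)
    (continuous_kernelSlice hqi hw) fun R => (exists_abs_kernelSlice_le hqi hw R).imp
      fun B hB s t hs ht => hB s 0 t hs (by simpa using (abs_nonneg s).trans hs) ht
  have hKop : uncurry (Kop q w) = fun p => 1 / 4 *
      ((∫ s in (0:ℝ)..p.1, kernelSlice q w s 0 p.2) -
        ∫ s in (0:ℝ)..p.1, kernelSlice q w s 0 p.1) := by
    ext ⟨ξ, η⟩
    rw [← integral_sub (intervalIntegrable_kernelSlice hq hqi hw _ _ _ _)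
      (intervalIntegrable_kernelSlice hq hqi hw _ _ _ _)]
    simp only [← kernelSlice_eq_sub hqi hw]
    rfl
  rw [hKop]
  exact continuous_const.mul (hΦ.sub (hΦ.comp (continuous_fst.prodMk continuous_fst)))

lemma continuous_Qfun (hqi : ∀ a b, IntervalIntegrable q volume a b) :
    Continuous (uncurry (Qfun q)) := by
  have hH := continuous_primitive hqi 0
  have hQ : uncurry (Qfun q) =
      fun p => -(1 / 4) * ((∫ s in (0:ℝ)..p.2, q s) - ∫ s in (0:ℝ)..p.1, q s) := by
    ext ⟨ξ, η⟩
    simp only [uncurry, Qfun, integral_interval_sub_left (hqi 0 η) (hqi 0 ξ)]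
  rw [hQ]
  exact continuous_const.mul ((hH.comp continuous_snd).sub (hH.comp continuous_fst))

lemma continuous_iterate_Kop (hq : Measurable q) (hqi : ∀ a b, IntervalIntegrable q volume a b)
    (n : ℕ) : Continuous (uncurry ((Kop q)^[n] (Qfun q))) := by
  induction n with
  | zero => exact continuous_Qfun hqi
  | succ n ih =>
    rw [Function.iterate_succ_apply']
    exact continuous_Kop hq hqi ih

end Continuity

section Bounds

variable {q : ℝ → ℝ} {R ξ η : ℝ}

lemma abs_Kop_le (hqi : ∀ a b, IntervalIntegrable q volume a b) {w : ℝ → ℝ → ℝ} {g : ℝ → ℝ}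
    (hg : IntervalIntegrable g volume 0 ξ) (hw : ∀ x y, 0 ≤ x → x ≤ y → y ≤ R → |w x y| ≤ g x)
    (hξ : 0 ≤ ξ) (hξη : ξ ≤ η) (hηR : η ≤ R) :
    |Kop q w ξ η| ≤ (∫ y in (0:ℝ)..R, |q y|) / 4 * ∫ x in (0:ℝ)..ξ, g x := by
  have hslice : ∀ s ∈ Ioc 0 ξ, ‖kernelSlice q w s ξ η‖ ≤ (∫ y in (0:ℝ)..R, |q y|) * g s := by
    rintro s ⟨hs₀, hsξ⟩
    rw [mul_comm]
    refine abs_intervalIntegral_comp_sub_mul_le hqi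
      ((abs_nonneg _).trans (hw s ξ hs₀.le hsξ (hξη.trans hηR))) (fun y hy => ?_) ?_
    · rw [uIoc_of_le hξη] at hy
      exact hw s y hs₀.le (hsξ.trans hy.1.le) (hy.2.trans hηR)
    · rw [uIcc_of_le (by linarith)]
      exact Icc_subset_Icc (by linarith) (by linarith)
  calc |Kop q w ξ η| = 1 / 4 * ‖∫ s in (0:ℝ)..ξ, kernelSlice q w s ξ η‖ := by
        rw [Real.norm_eq_abs, ← abs_of_pos (by norm_num : (0:ℝ) < 1 / 4), ← abs_mul]
        rfl
    _ ≤ 1 / 4 * ∫ s in (0:ℝ)..ξ, (∫ y in (0:ℝ)..R, |q y|) * g s := by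
        gcongr
        exact norm_integral_le_of_norm_le hξ (ae_of_all _ hslice) (hg.const_mul _)
    _ = (∫ y in (0:ℝ)..R, |q y|) / 4 * ∫ x in (0:ℝ)..ξ, g x := by
        rw [intervalIntegral.integral_const_mul]
        ring

lemma abs_Qfun_le (hqi : ∀ a b, IntervalIntegrable q volume a b)
    (hξ : 0 ≤ ξ) (hξη : ξ ≤ η) (hηR : η ≤ R) :
    |Qfun q ξ η| ≤ (∫ y in (0:ℝ)..R, |q y|) / 4 := by
  have hmono : ∫ y in ξ..η, |q y| ≤ ∫ y in (0:ℝ)..R, |q y| :=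
    integral_mono_interval hξ hξη hηR (ae_of_all _ fun _ => abs_nonneg _) (hqi 0 R).abs
  rw [Qfun, abs_mul, abs_neg, abs_of_pos (by norm_num : (0:ℝ) < 1 / 4)]
  linarith [abs_integral_le_integral_abs (f := q) (μ := volume) hξη]

lemma abs_iterate_Kop_le (hqi : ∀ a b, IntervalIntegrable q volume a b) (n : ℕ)
    (hξ : 0 ≤ ξ) (hξη : ξ ≤ η) (hηR : η ≤ R) :
    |(Kop q)^[n] (Qfun q) ξ η| ≤
      (∫ y in (0:ℝ)..R, |q y|) / 4 * ((∫ y in (0:ℝ)..R, |q y|) / 4 * ξ) ^ n / n ! := by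
  set c := (∫ y in (0:ℝ)..R, |q y|) / 4
  induction n generalizing ξ η with
  | zero => simpa using abs_Qfun_le hqi hξ hξη hηR
  | succ n ih =>
    rw [Function.iterate_succ_apply']
    have hg : Continuous fun x : ℝ => c * (c * x) ^ n / n ! := by fun_prop
    refine (abs_Kop_le hqi (hg.intervalIntegrable _ _) (fun x y hx hxy hyR => ih hx hxy hyR)
      hξ hξη hηR).trans_eq ?_
    rw [intervalIntegral.integral_div, intervalIntegral.integral_const_mul]
    simp only [mul_pow, intervalIntegral.integral_const_mul, integral_pow, Nat.factorial_succ]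
    push_cast
    field_simp
    ring

end Bounds

section NeumannSeries

variable {q : ℝ → ℝ}

lemma Kop_const_mul (q : ℝ → ℝ) (w : ℝ → ℝ → ℝ) (a ξ η : ℝ) :
    Kop q (fun x y => a * w x y) ξ η = a * Kop q w ξ η := by
  simp only [Kop, mul_left_comm _ a, intervalIntegral.integral_const_mul]

lemma Kop_tsum (hq : Measurable q) (hqi : ∀ a b, IntervalIntegrable q volume a b)
    {w : ℕ → ℝ → ℝ → ℝ} {B : ℕ → ℝ} (hw : ∀ n, Continuous (uncurry (w n))) (hB : Summable B)
    {ξ η : ℝ} (hwB : ∀ n x y, 0 ≤ x → x ≤ y → y ≤ η → |w n x y| ≤ B n) (hξ : 0 ≤ ξ)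
    (hξη : ξ ≤ η) :
    Kop q (fun x y => ∑' n, w n x y) ξ η = ∑' n, Kop q (w n) ξ η := by
  have hB₀ : ∀ n, 0 ≤ B n := fun n => (abs_nonneg _).trans (hwB n ξ ξ hξ le_rfl hξη)
  have hinner : ∀ s ∈ [[0, ξ]],
      ∫ y in ξ..η, q (y - s) * ∑' n, w n s y = ∑' n, kernelSlice q (w n) s ξ η := by
    intro s hs
    rw [uIcc_of_le hξ] at hs
    simp only [← tsum_mul_left]
    refine intervalIntegral_tsum_of_abs_le_mul
      (fun n => intervalIntegrable_kernelSlice_integrand hqi (hw n) s ξ η)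
      (intervalIntegrable_comp_sub hqi s ξ η).abs (fun n y hy => ?_) hB
    rw [uIoc_of_le hξη] at hy
    rw [abs_mul, mul_comm]
    exact mul_le_mul_of_nonneg_right (hwB n s y hs.1 (hs.2.trans hy.1.le) hy.2) (abs_nonneg _)
  have houter : ∫ s in (0:ℝ)..ξ, ∑' n, kernelSlice q (w n) s ξ η =
      ∑' n, ∫ s in (0:ℝ)..ξ, kernelSlice q (w n) s ξ η := by
    refine intervalIntegral_tsum_of_abs_le_mul
      (fun n => intervalIntegrable_kernelSlice hq hqi (hw n) ξ η 0 ξ)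
      (intervalIntegrable_const (c := ∫ y in (0:ℝ)..η, |q y|)) (fun n s hs => ?_) hB
    rw [uIoc_of_le hξ] at hs
    refine abs_intervalIntegral_comp_sub_mul_le hqi (hB₀ n) (fun y hy => ?_) ?_
    · rw [uIoc_of_le hξη] at hy
      exact hwB n s y hs.1.le (hs.2.trans hy.1.le) hy.2
    · rw [uIcc_of_le (by linarith)]
      exact Icc_subset_Icc (by linarith [hs.2]) (by linarith [hs.1])
  show 1 / 4 * ∫ s in (0:ℝ)..ξ, ∫ y in ξ..η, q (y - s) * ∑' n, w n s y =
    ∑' n, 1 / 4 * ∫ s in (0:ℝ)..ξ, kernelSlice q (w n) s ξ η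
  rw [integral_congr hinner, houter, tsum_mul_left]

lemma norm_neumannTerm_le (hqi : ∀ a b, IntervalIntegrable q volume a b) (n : ℕ) {R ξ η : ℝ}
    (hξ : 0 ≤ ξ) (hξη : ξ ≤ η) (hηR : η ≤ R) :
    ‖(-1 : ℝ) ^ n * (Kop q)^[n] (Qfun q) ξ η‖ ≤
      (∫ y in (0:ℝ)..R, |q y|) / 4 * ((∫ y in (0:ℝ)..R, |q y|) / 4 * R) ^ n / n ! := by
  have hc : 0 ≤ (∫ y in (0:ℝ)..R, |q y|) / 4 :=
    div_nonneg (integral_nonneg (hξ.trans (hξη.trans hηR)) fun _ _ => abs_nonneg _) (by norm_num)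
  rw [norm_mul, norm_pow, norm_neg, norm_one, one_pow, one_mul, Real.norm_eq_abs]
  refine (abs_iterate_Kop_le hqi n hξ hξη hηR).trans ?_
  gcongr
  exact hξη.trans hηR

lemma summable_mul_pow_div_factorial (c x : ℝ) : Summable fun n : ℕ => c * x ^ n / n ! := by
  simpa only [mul_div_assoc] using (Real.summable_pow_div_factorial x).mul_left c

lemma summable_abs_neumannTerm (hqi : ∀ a b, IntervalIntegrable q volume a b) {ξ η : ℝ}
    (hξ : 0 ≤ ξ) (hξη : ξ ≤ η) :
    Summable fun n : ℕ => |(-1 : ℝ) ^ n * (Kop q)^[n] (Qfun q) ξ η| :=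
  (summable_mul_pow_div_factorial _ _).of_nonneg_of_le (fun _ => abs_nonneg _)
    fun n => norm_neumannTerm_le hqi n hξ hξη le_rfl

lemma tendstoUniformlyOn_neumannSeries (hqi : ∀ a b, IntervalIntegrable q volume a b) (R : ℝ) :
    TendstoUniformlyOn
      (fun N : ℕ => fun p : ℝ × ℝ =>
        ∑ n ∈ Finset.range N, (-1 : ℝ) ^ n * (Kop q)^[n] (Qfun q) p.1 p.2)
      (fun p : ℝ × ℝ => ∑' n, (-1 : ℝ) ^ n * (Kop q)^[n] (Qfun q) p.1 p.2) atTop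
      {p : ℝ × ℝ | 0 ≤ p.1 ∧ p.1 ≤ p.2 ∧ p.2 ≤ R} :=
  tendstoUniformlyOn_tsum_nat (summable_mul_pow_div_factorial _ _)
    fun n _ hp => norm_neumannTerm_le hqi n hp.1 hp.2.1 hp.2.2

lemma continuousOn_neumannSeries (hq : Measurable q)
    (hqi : ∀ a b, IntervalIntegrable q volume a b) :
    ContinuousOn (fun p : ℝ × ℝ => ∑' n, (-1 : ℝ) ^ n * (Kop q)^[n] (Qfun q) p.1 p.2)
      {p : ℝ × ℝ | 0 ≤ p.1 ∧ p.1 ≤ p.2} := by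
  intro p₀ hp₀
  set R := p₀.2 + 1
  have hcont : ContinuousOn
      (fun p : ℝ × ℝ => ∑' n, (-1 : ℝ) ^ n * (Kop q)^[n] (Qfun q) p.1 p.2)
      {p : ℝ × ℝ | 0 ≤ p.1 ∧ p.1 ≤ p.2 ∧ p.2 < R} :=
    continuousOn_tsum
      (fun n => (continuous_const.mul (continuous_iterate_Kop hq hqi n)).continuousOn)
      (summable_mul_pow_div_factorial _ _)
      fun n _ hp => norm_neumannTerm_le hqi n hp.1 hp.2.1 hp.2.2.le
  refine (hcont p₀ ⟨hp₀.1, hp₀.2, lt_add_one _⟩).mono_of_mem_nhdsWithin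
    (mem_nhdsWithin.2 ⟨{p | p.2 < R}, isOpen_lt continuous_snd continuous_const,
      show p₀.2 < R from lt_add_one _, ?_⟩)
  exact fun p ⟨hpR, hp⟩ => ⟨hp.1, hp.2, hpR⟩

lemma neumannSeries_eq_Qfun_sub_Kop (hq : Measurable q)
    (hqi : ∀ a b, IntervalIntegrable q volume a b) {ξ η : ℝ} (hξ : 0 ≤ ξ) (hξη : ξ ≤ η) :
    ∑' n, (-1 : ℝ) ^ n * (Kop q)^[n] (Qfun q) ξ η =
      Qfun q ξ η - Kop q (fun x y => ∑' n, (-1 : ℝ) ^ n * (Kop q)^[n] (Qfun q) x y) ξ η := by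
  have hterm : ∀ n : ℕ, (-1 : ℝ) ^ (n + 1) * (Kop q)^[n + 1] (Qfun q) ξ η =
      -Kop q (fun x y => (-1 : ℝ) ^ n * (Kop q)^[n] (Qfun q) x y) ξ η := by
    intro n
    rw [Kop_const_mul, Function.iterate_succ_apply', pow_succ]
    ring
  rw [Kop_tsum hq hqi (w := fun n x y => (-1 : ℝ) ^ n * (Kop q)^[n] (Qfun q) x y)
      (fun n => continuous_const.mul (continuous_iterate_Kop hq hqi n))
      (summable_mul_pow_div_factorial _ _)
      (fun n x y hx hxy hy => norm_neumannTerm_le hqi n hx hxy hy) hξ hξη,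
    (summable_abs_neumannTerm hqi hξ hξη).of_abs.tsum_eq_zero_add]
  simp only [hterm, tsum_neg, pow_zero, one_mul, Function.iterate_zero, id]
  ring

end NeumannSeries

theorem neumann_series_converges_general
    (q : ℝ → ℝ) (hq : Measurable q)
    (hloc : ∀ a b : ℝ, IntervalIntegrable (fun s => |q s|) volume a b) :
    ∃ v : ℝ → ℝ → ℝ,
      (∀ ξ η : ℝ, 0 ≤ ξ → ξ ≤ η →
        Summable (fun n : ℕ => |(-1 : ℝ) ^ n * (Kop q)^[n] (Qfun q) ξ η|) ∧
        HasSum (fun n : ℕ => (-1 : ℝ) ^ n * (Kop q)^[n] (Qfun q) ξ η) (v ξ η)) ∧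
      (∀ Kc : Set (ℝ × ℝ), IsCompact Kc →
        TendstoUniformlyOn
          (fun N : ℕ => fun p : ℝ × ℝ =>
            ∑ n ∈ Finset.range N, (-1 : ℝ) ^ n * (Kop q)^[n] (Qfun q) p.1 p.2)
          (fun p : ℝ × ℝ => v p.1 p.2) atTop
          (Kc ∩ {p : ℝ × ℝ | 0 ≤ p.1 ∧ p.1 ≤ p.2})) ∧
      ContinuousOn (fun p : ℝ × ℝ => v p.1 p.2) {p : ℝ × ℝ | 0 ≤ p.1 ∧ p.1 ≤ p.2} ∧
      (∀ ξ η : ℝ, 0 ≤ ξ → ξ ≤ η → v ξ η = Qfun q ξ η - Kop q v ξ η) := by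
  have hqi : ∀ a b, IntervalIntegrable q volume a b := fun a b =>
    (IntervalIntegrable.intervalIntegrable_norm_iff hq.aestronglyMeasurable.restrict).1
      (by simpa only [Real.norm_eq_abs] using hloc a b)
  refine ⟨fun ξ η => ∑' n, (-1 : ℝ) ^ n * (Kop q)^[n] (Qfun q) ξ η, fun ξ η hξ hξη => ?_,
    fun Kc hKc => ?_, continuousOn_neumannSeries hq hqi,
    fun ξ η hξ hξη => neumannSeries_eq_Qfun_sub_Kop hq hqi hξ hξη⟩
  · have hsum := summable_abs_neumannTerm hqi hξ hξη
    exact ⟨hsum, hsum.of_abs.hasSum⟩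
  · obtain ⟨R, hR⟩ := (hKc.image continuous_snd).bddAbove
    exact (tendstoUniformlyOn_neumannSeries hqi R).mono
      fun p ⟨hpK, hp⟩ => ⟨hp.1, hp.2, hR ⟨p, hpK, rfl⟩⟩

theorem neumann_series_converges
    (q : ℝ → ℝ) (hq : Measurable q)
    (hloc : ∀ a b : ℝ, IntervalIntegrable (fun s => |q s|) volume a b)
    (M : ℝ)
    (hM : IsLUB {y : ℝ | ∃ x : ℝ, 0 ≤ x ∧ y = ∫ s in x..(x + 1), |q s|} M) :
    ∃ v : ℝ → ℝ → ℝ,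
      (∀ ξ η : ℝ, 0 ≤ ξ → ξ ≤ η →
        Summable (fun n : ℕ => |(-1 : ℝ) ^ n * (Kop q)^[n] (Qfun q) ξ η|) ∧
        HasSum (fun n : ℕ => (-1 : ℝ) ^ n * (Kop q)^[n] (Qfun q) ξ η) (v ξ η)) ∧
      (∀ Kc : Set (ℝ × ℝ), IsCompact Kc →
        TendstoUniformlyOn
          (fun N : ℕ => fun p : ℝ × ℝ =>
            ∑ n ∈ Finset.range N, (-1 : ℝ) ^ n * (Kop q)^[n] (Qfun q) p.1 p.2)
          (fun p : ℝ × ℝ => v p.1 p.2) atTop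
          (Kc ∩ {p : ℝ × ℝ | 0 ≤ p.1 ∧ p.1 ≤ p.2})) ∧
      ContinuousOn (fun p : ℝ × ℝ => v p.1 p.2) {p : ℝ × ℝ | 0 ≤ p.1 ∧ p.1 ≤ p.2} ∧
      (∀ ξ η : ℝ, 0 ≤ ξ → ξ ≤ η → v ξ η = Qfun q ξ η - Kop q v ξ η) :=
  neumann_series_converges_general q hq hloc
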